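/- Over a right V-ring, every right R-module is a co-Kasch module. -/
import Mathlib


def IsCoKasch (R : Type*) [Ring R] (M : Type*) [AddCommGroup M] [Module R M] : Prop :=
  ∀ (K : Submodule R M) (S : Submodule R (M ⧸ K)), IsSimpleModule R S →
    ∃ f : M →ₗ[R] S, Function.Surjective f

/-- Over a right V-ring (every simple module is injective), every module is
co-Kasch. -/
theorem stmt12 (R : Type u) [Ring R]
    (hV : ∀ (S : Type u) [AddCommGroup S] [Module R S], IsSimpleModule R S →
      Module.Injective R S) :
    ∀ (M : Type u) [AddCommGroup M] [Module R M], IsCoKasch R M := by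
  intro M _ _ K S hS
  obtain ⟨g, hg⟩ := (hV S hS).out S.subtype S.injective_subtype LinearMap.id
  refine ⟨g.comp K.mkQ, fun s => ?_⟩
  obtain ⟨m, hm⟩ := K.mkQ_surjective (s : M ⧸ K)
  exact ⟨m, by simpa [hm] using hg s⟩
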